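/- arXiv:2009.03975 — 2 statements merged into one kernel-verified Lean document; each statement's English description precedes it below -/
import Mathlib

section
/- For p ∈ (1,∞), with q = p/(p−1) and σ̂(e) = σ(e)^{−q/p}: the optimal expected edge usage is unique, i.e. if μ₁ and μ₂ are both pmfs minimizing E_{q,σ̂}(η_μ) = Σ_{e∈E} σ̂(e)η_μ(e)^q over all pmfs μ on Γ, then η_{μ₁} = η_{μ₂}. Moreover, writing η* for this common minimizer and ρ* for the (unique) admissible density with E_{p,σ}(ρ*) = Mod_{p,σ}(Γ), for every e ∈ E one has σ(e)ρ*(e)^p / E_{p,σ}(ρ*) = σ̂(e)η*(e)^q / E_{q,σ̂}(η*). -/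
open Finset

noncomputable section

/-- A density `ρ` is admissible for the usage matrix `N` if it is nonnegative and
every object has `ρ`-length at least 1. -/
def IsAdmissible {E Γ : Type*} [Fintype E] (N : Γ → E → ℝ) (ρ : E → ℝ) : Prop :=
  (∀ e, 0 ≤ ρ e) ∧ ∀ γ : Γ, 1 ≤ ∑ e, N γ e * ρ e

/-- The `p`-energy of a density. -/
def pEnergy {E : Type*} [Fintype E] (σ : E → ℝ) (p : ℝ) (ρ : E → ℝ) : ℝ :=
  ∑ e, σ e * ρ e ^ p

/-- The `p`-modulus: the infimum of the `p`-energy over admissible densities. -/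
def pModulus {E Γ : Type*} [Fintype E] (N : Γ → E → ℝ) (σ : E → ℝ) (p : ℝ) : ℝ :=
  sInf {x | ∃ ρ : E → ℝ, IsAdmissible N ρ ∧ x = pEnergy σ p ρ}

/-- A probability mass function on `Γ`. -/
def IsPmf {Γ : Type*} [Fintype Γ] (μ : Γ → ℝ) : Prop :=
  (∀ γ, 0 ≤ μ γ) ∧ ∑ γ, μ γ = 1

/-- The expected edge usage `η_μ(e)` of a pmf `μ`. -/
def edgeUsage {E Γ : Type*} [Fintype Γ] (N : Γ → E → ℝ) (μ : Γ → ℝ) (e : E) : ℝ :=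
  ∑ γ, N γ e * μ γ

/-!
Let `μ` be a minimizing pmf with usage `η` and dual energy `β = ∑ σ̂ η^q`. Comparing `μ` with
the pmfs on the segment towards a point mass `δ_γ` gives the first-order condition
`β ≤ ∑ σ̂ η^(q-1) N(γ, ·)`, which says exactly that `ρ_μ = σ̂ η^(q-1) / β` is admissible.
Its `p`-energy is `β^(1-p)`, while Hölder's inequality gives `β^(1-p) ≤ E_{p,σ}(ρ)` for every
admissible `ρ`, so `ρ_μ` is an optimal density. The `p`-energy is strictly convex, so the optimal
density is unique and `ρ_μ₁ = ρ* = ρ_μ₂`. Both minimizers have the same dual energy and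
`x ↦ x^(q-1)` is injective on `[0, ∞)`, hence `η₁ = η₂`; the relation between `σ ρ*^p` and
`σ̂ η*^q` is then a direct computation.
-/

section EdgeUsage

variable {E Γ : Type*} [Fintype Γ]

lemma edgeUsage_nonneg {N : Γ → E → ℝ} (hN : ∀ γ e, 0 ≤ N γ e) {μ : Γ → ℝ} (hμ : IsPmf μ)
    (e : E) : 0 ≤ edgeUsage N μ e :=
  sum_nonneg fun γ _ => mul_nonneg (hN γ e) (hμ.1 γ)

lemma edgeUsage_add_smul_sub (N : Γ → E → ℝ) (μ ν : Γ → ℝ) (t : ℝ) :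
    edgeUsage N (μ + t • (ν - μ)) = edgeUsage N μ + t • (edgeUsage N ν - edgeUsage N μ) := by
  ext e
  simp only [edgeUsage, Pi.add_apply, Pi.smul_apply, Pi.sub_apply, smul_eq_mul, mul_sum,
    ← sum_sub_distrib, ← sum_add_distrib]
  exact sum_congr rfl fun γ _ => by ring

lemma edgeUsage_single [DecidableEq Γ] (N : Γ → E → ℝ) (γ : Γ) :
    edgeUsage N (Pi.single γ 1) = N γ := by
  ext e
  simp [edgeUsage, Pi.single_apply]

lemma isPmf_single [DecidableEq Γ] (γ : Γ) : IsPmf (Pi.single γ (1 : ℝ)) :=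
  ⟨fun γ' => by by_cases h : γ' = γ <;> simp [h], by simp⟩

lemma IsPmf.add_smul_sub {μ ν : Γ → ℝ} (hμ : IsPmf μ) (hν : IsPmf ν) {t : ℝ}
    (ht : t ∈ Set.Icc (0 : ℝ) 1) : IsPmf (μ + t • (ν - μ)) := by
  refine ⟨fun γ => ?_, ?_⟩
  · have h := add_nonneg (mul_nonneg (sub_nonneg.2 ht.2) (hμ.1 γ)) (mul_nonneg ht.1 (hν.1 γ))
    simp only [Pi.add_apply, Pi.smul_apply, Pi.sub_apply, smul_eq_mul]
    linarith
  · simp only [Pi.add_apply, Pi.smul_apply, Pi.sub_apply, smul_eq_mul, sum_add_distrib,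
      ← mul_sum, sum_sub_distrib, hμ.2, hν.2]
    ring

lemma one_le_sum_edgeUsage_mul [Fintype E] {N : Γ → E → ℝ} {μ : Γ → ℝ} {ρ : E → ℝ}
    (hμ : IsPmf μ) (hρ : IsAdmissible N ρ) : 1 ≤ ∑ e, edgeUsage N μ e * ρ e :=
  calc 1 = ∑ γ, μ γ * 1 := by simp [hμ.2]
    _ ≤ ∑ γ, μ γ * ∑ e, N γ e * ρ e :=
      sum_le_sum fun γ _ => mul_le_mul_of_nonneg_left (hρ.2 γ) (hμ.1 γ)
    _ = ∑ e, edgeUsage N μ e * ρ e := by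
      simp only [edgeUsage, mul_sum, sum_mul]
      rw [sum_comm]
      exact sum_congr rfl fun _ _ => sum_congr rfl fun _ _ => by ring

end EdgeUsage

section Energy

variable {E : Type*} [Fintype E]

lemma pEnergy_nonneg {σ ρ : E → ℝ} (hσ : ∀ e, 0 ≤ σ e) (hρ : ∀ e, 0 ≤ ρ e) (p : ℝ) :
    0 ≤ pEnergy σ p ρ :=
  sum_nonneg fun e _ => mul_nonneg (hσ e) (Real.rpow_nonneg (hρ e) p)

lemma pEnergy_pos_of_one_le_sum_mul {w η ρ : E → ℝ} (hw : ∀ e, 0 < w e) (hη : ∀ e, 0 ≤ η e)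
    (h : 1 ≤ ∑ e, η e * ρ e) (q : ℝ) : 0 < pEnergy w q η := by
  obtain ⟨e, -, he⟩ := exists_ne_zero_of_sum_ne_zero (by linarith : ∑ e, η e * ρ e ≠ 0)
  have hηe : 0 < η e := (hη e).lt_of_ne (left_ne_zero_of_mul he).symm
  exact sum_pos' (fun e _ => mul_nonneg (hw e).le (Real.rpow_nonneg (hη e) q))
    ⟨e, mem_univ e, mul_pos (hw e) (Real.rpow_pos_of_pos hηe q)⟩

lemma sum_mul_rpow_sub_one_mul_sub_nonneg_of_isMinOn {w η ξ : E → ℝ} {q : ℝ} (hq : 1 < q)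
    (hmin : IsMinOn (fun t : ℝ => pEnergy w q (η + t • (ξ - η))) (Set.Icc 0 1) 0) :
    0 ≤ ∑ e, w e * η e ^ (q - 1) * (ξ e - η e) := by
  have hderiv : HasDerivAt (fun t : ℝ => pEnergy w q (η + t • (ξ - η)))
      (∑ e, w e * ((ξ e - η e) * q * η e ^ (q - 1))) 0 := by
    refine HasDerivAt.fun_sum fun e _ => HasDerivAt.const_mul _ ?_
    have hline : HasDerivAt (fun t : ℝ => η e + t * (ξ e - η e)) (ξ e - η e) 0 := by
      simpa using ((hasDerivAt_id (0 : ℝ)).mul_const (ξ e - η e)).const_add (η e)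
    simpa using hline.rpow_const (Or.inr hq.le)
  have hone : (1 : ℝ) ∈ posTangentConeAt (Set.Icc 0 1) 0 :=
    mem_posTangentConeAt_of_segment_subset (by simp [segment_eq_Icc])
  have h := hmin.localize.hasFDerivWithinAt_nonneg hderiv.hasFDerivAt.hasFDerivWithinAt hone
  rw [ContinuousLinearMap.toSpanSingleton_apply, one_smul] at h
  have hsum : ∑ e, w e * ((ξ e - η e) * q * η e ^ (q - 1))
      = q * ∑ e, w e * η e ^ (q - 1) * (ξ e - η e) := by
    rw [mul_sum]; exact sum_congr rfl fun e _ => by ring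
  rw [hsum] at h
  exact nonneg_of_mul_nonneg_right h (by linarith)

lemma pEnergy_edgeUsage_le_of_forall_le {Γ : Type*} [Fintype Γ] {N : Γ → E → ℝ}
    (hN : ∀ γ e, 0 ≤ N γ e) {w : E → ℝ} {q : ℝ} (hq : 1 < q) {μ : Γ → ℝ} (hμ : IsPmf μ)
    (hmin : ∀ ν, IsPmf ν → pEnergy w q (edgeUsage N μ) ≤ pEnergy w q (edgeUsage N ν)) (γ : Γ) :
    pEnergy w q (edgeUsage N μ) ≤ ∑ e, w e * edgeUsage N μ e ^ (q - 1) * N γ e := by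
  classical
  have hfirst := sum_mul_rpow_sub_one_mul_sub_nonneg_of_isMinOn (w := w) (ξ := N γ) hq
    fun t ht => by
      simp only [Set.mem_ofPred_eq, zero_smul, add_zero]
      rw [← edgeUsage_single N γ, ← edgeUsage_add_smul_sub]
      exact hmin _ (hμ.add_smul_sub (isPmf_single γ) ht)
  have hsplit : ∑ e, w e * edgeUsage N μ e ^ (q - 1) * (N γ e - edgeUsage N μ e)
      = ∑ e, w e * edgeUsage N μ e ^ (q - 1) * N γ e - pEnergy w q (edgeUsage N μ) := by
    rw [pEnergy, ← sum_sub_distrib]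
    refine sum_congr rfl fun e _ => ?_
    rw [← sub_add_cancel q 1, Real.rpow_add_one' (edgeUsage_nonneg hN hμ e) (by linarith),
      sub_add_cancel]
    ring
  linarith

end Energy

section Modulus

variable {E Γ : Type*} [Fintype E] {N : Γ → E → ℝ} {σ : E → ℝ} {p : ℝ}

lemma pModulus_le_pEnergy (hσ : ∀ e, 0 ≤ σ e) {ρ : E → ℝ} (hρ : IsAdmissible N ρ) :
    pModulus N σ p ≤ pEnergy σ p ρ :=
  csInf_le ⟨0, by rintro x ⟨ρ', hρ', rfl⟩; exact pEnergy_nonneg hσ hρ'.1 p⟩ ⟨ρ, hρ, rfl⟩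

lemma IsAdmissible.half_add {ρ ρ' : E → ℝ} (hρ : IsAdmissible N ρ) (hρ' : IsAdmissible N ρ') :
    IsAdmissible N (fun e => (ρ e + ρ' e) / 2) := by
  refine ⟨fun e => by linarith [hρ.1 e, hρ'.1 e], fun γ => ?_⟩
  have hsum : ∑ e, N γ e * ((ρ e + ρ' e) / 2) = (∑ e, N γ e * ρ e + ∑ e, N γ e * ρ' e) / 2 := by
    rw [← sum_add_distrib, sum_div]; exact sum_congr rfl fun e _ => by ring
  linarith [hρ.2 γ, hρ'.2 γ]

lemma pEnergy_half_add_lt (hp : 1 < p) (hσ : ∀ e, 0 < σ e) {ρ ρ' : E → ℝ}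
    (hρ : ∀ e, 0 ≤ ρ e) (hρ' : ∀ e, 0 ≤ ρ' e) (hne : ρ ≠ ρ') :
    pEnergy σ p (fun e => (ρ e + ρ' e) / 2) < (pEnergy σ p ρ + pEnergy σ p ρ') / 2 := by
  obtain ⟨e₀, he₀⟩ := Function.ne_iff.1 hne
  have hle : ∀ e, ((ρ e + ρ' e) / 2) ^ p ≤ (ρ e ^ p + ρ' e ^ p) / 2 := fun e => by
    have h := (convexOn_rpow hp.le).2 (Set.mem_Ici.2 (hρ e)) (Set.mem_Ici.2 (hρ' e))
      (by norm_num : (0 : ℝ) ≤ 1 / 2) (by norm_num : (0 : ℝ) ≤ 1 / 2) (by norm_num)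
    simp only [smul_eq_mul] at h
    rw [show 1 / 2 * ρ e + 1 / 2 * ρ' e = (ρ e + ρ' e) / 2 by ring] at h
    linarith
  have hlt : ((ρ e₀ + ρ' e₀) / 2) ^ p < (ρ e₀ ^ p + ρ' e₀ ^ p) / 2 := by
    have h := (strictConvexOn_rpow hp).2 (Set.mem_Ici.2 (hρ e₀)) (Set.mem_Ici.2 (hρ' e₀)) he₀
      (by norm_num : (0 : ℝ) < 1 / 2) (by norm_num : (0 : ℝ) < 1 / 2) (by norm_num)
    simp only [smul_eq_mul] at h
    rw [show 1 / 2 * ρ e₀ + 1 / 2 * ρ' e₀ = (ρ e₀ + ρ' e₀) / 2 by ring] at h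
    linarith
  rw [pEnergy, pEnergy, pEnergy, ← sum_add_distrib, sum_div]
  exact sum_lt_sum (fun e _ => by nlinarith [hle e, hσ e])
    ⟨e₀, mem_univ e₀, by nlinarith [mul_lt_mul_of_pos_left hlt (hσ e₀)]⟩

lemma eq_of_pEnergy_eq_pModulus (hp : 1 < p) (hσ : ∀ e, 0 < σ e) {ρ ρ' : E → ℝ}
    (hρ : IsAdmissible N ρ) (hρ' : IsAdmissible N ρ') (h : pEnergy σ p ρ = pModulus N σ p)
    (h' : pEnergy σ p ρ' = pModulus N σ p) : ρ = ρ' := by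
  by_contra hne
  have hmod := pModulus_le_pEnergy (p := p) (fun e => (hσ e).le) (hρ.half_add hρ')
  have hlt := pEnergy_half_add_lt hp hσ hρ.1 hρ'.1 hne
  linarith

end Modulus

section DualDensity

variable {E : Type*} [Fintype E]

def dualWeight (σ : E → ℝ) (p q : ℝ) : E → ℝ := fun e => σ e ^ (-(q / p))

def dualDensity (w : E → ℝ) (q : ℝ) (η : E → ℝ) : E → ℝ :=
  fun e => w e * η e ^ (q - 1) / pEnergy w q η

lemma isAdmissible_dualDensity {Γ : Type*} {N : Γ → E → ℝ} {w η : E → ℝ} {q : ℝ}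
    (hw : ∀ e, 0 ≤ w e) (hη : ∀ e, 0 ≤ η e) (hβ : 0 < pEnergy w q η)
    (hvar : ∀ γ, pEnergy w q η ≤ ∑ e, w e * η e ^ (q - 1) * N γ e) :
    IsAdmissible N (dualDensity w q η) := by
  refine ⟨fun e => div_nonneg (mul_nonneg (hw e) (Real.rpow_nonneg (hη e) _)) hβ.le,
    fun γ => ?_⟩
  have hsum : ∑ e, N γ e * dualDensity w q η e
      = (∑ e, w e * η e ^ (q - 1) * N γ e) / pEnergy w q η := by
    rw [sum_div]; exact sum_congr rfl fun e _ => by rw [dualDensity]; ring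
  rw [hsum, le_div_iff₀ hβ, one_mul]
  exact hvar γ

lemma eq_of_dualDensity_eq {w η η' : E → ℝ} {q : ℝ}
    (hw : ∀ e, w e ≠ 0) (hq : 1 < q) (hη : ∀ e, 0 ≤ η e) (hη' : ∀ e, 0 ≤ η' e)
    (hβ : pEnergy w q η = pEnergy w q η') (hβ₀ : pEnergy w q η ≠ 0)
    (h : dualDensity w q η = dualDensity w q η') : η = η' := by
  funext e
  have he := congrFun h e
  rw [dualDensity, dualDensity, ← hβ, div_left_inj' hβ₀, mul_right_inj' (hw e)] at he
  exact Real.rpow_left_injOn (by linarith) (hη e) (hη' e) he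

variable {σ : E → ℝ} {p q : ℝ}

omit [Fintype E] in
lemma dualWeight_pos (hσ : ∀ e, 0 < σ e) (e : E) : 0 < dualWeight σ p q e :=
  Real.rpow_pos_of_pos (hσ e) _

lemma mul_dualDensity_rpow (hpq : p.HolderConjugate q) (hσ : ∀ e, 0 < σ e) {η : E → ℝ}
    (hη : ∀ e, 0 ≤ η e) (e : E) :
    σ e * dualDensity (dualWeight σ p q) q η e ^ p
      = dualWeight σ p q e * η e ^ q / pEnergy (dualWeight σ p q) q η ^ p := by
  have hw := dualWeight_pos (p := p) (q := q) hσ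
  have hβ := pEnergy_nonneg (fun e => (hw e).le) hη q
  have hexp : -(q / p) = 1 - q := by rw [hpq.symm.div_conj_eq_sub_one]; ring
  rw [dualDensity, Real.div_rpow (mul_nonneg (hw e).le (Real.rpow_nonneg (hη e) _)) hβ,
    dualWeight,    Real.mul_rpow (Real.rpow_nonneg (hσ e).le _) (Real.rpow_nonneg (hη e) _),
    ← Real.rpow_mul (hσ e).le, ← Real.rpow_mul (hη e), hpq.symm.sub_one_mul_conj, hexp,
    show (1 - q) * p = 1 - q - 1 by nlinarith [hpq.mul_eq_add],
    Real.rpow_sub_one (hσ e).ne']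
  field_simp [(hσ e).ne']

lemma pEnergy_dualDensity (hpq : p.HolderConjugate q) (hσ : ∀ e, 0 < σ e) {η : E → ℝ}
    (hη : ∀ e, 0 ≤ η e) (hβ : 0 < pEnergy (dualWeight σ p q) q η) :
    pEnergy σ p (dualDensity (dualWeight σ p q) q η)
      = pEnergy (dualWeight σ p q) q η ^ (1 - p) := by
  rw [Real.rpow_sub hβ, Real.rpow_one, pEnergy, pEnergy, sum_div]
  exact sum_congr rfl fun e _ => mul_dualDensity_rpow hpq hσ hη e

lemma mul_dualDensity_rpow_div_pEnergy (hpq : p.HolderConjugate q) (hσ : ∀ e, 0 < σ e)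
    {η : E → ℝ} (hη : ∀ e, 0 ≤ η e) (hβ : 0 < pEnergy (dualWeight σ p q) q η) (e : E) :
    σ e * dualDensity (dualWeight σ p q) q η e ^ p
        / pEnergy σ p (dualDensity (dualWeight σ p q) q η)
      = dualWeight σ p q e * η e ^ q / pEnergy (dualWeight σ p q) q η := by
  rw [mul_dualDensity_rpow hpq hσ hη, pEnergy_dualDensity hpq hσ hη hβ, div_div,
    ← Real.rpow_add hβ, add_sub_cancel, Real.rpow_one]

lemma rpow_one_sub_le_pEnergy (hpq : p.HolderConjugate q) (hσ : ∀ e, 0 < σ e) {ρ η : E → ℝ}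
    (hρ : ∀ e, 0 ≤ ρ e) (hη : ∀ e, 0 ≤ η e) (h : 1 ≤ ∑ e, η e * ρ e) :
    pEnergy (dualWeight σ p q) q η ^ (1 - p) ≤ pEnergy σ p ρ := by
  have hholder := Real.inner_le_Lp_mul_Lq_of_nonneg (s := univ) hpq
    (f := fun e => σ e ^ (1 / p) * ρ e) (g := fun e => σ e ^ (-(1 / p)) * η e)
    (fun e _ => mul_nonneg (Real.rpow_nonneg (hσ e).le _) (hρ e))
    (fun e _ => mul_nonneg (Real.rpow_nonneg (hσ e).le _) (hη e))
  have hpair : ∑ e ∈ univ, σ e ^ (1 / p) * ρ e * (σ e ^ (-(1 / p)) * η e) = ∑ e, η e * ρ e :=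
    sum_congr rfl fun e _ => by
      rw [mul_mul_mul_comm, ← Real.rpow_add (hσ e), add_neg_cancel, Real.rpow_zero, one_mul,
        mul_comm]
  have hfp : ∑ e ∈ univ, (σ e ^ (1 / p) * ρ e) ^ p = pEnergy σ p ρ :=
    sum_congr rfl fun e _ => by
      rw [Real.mul_rpow (Real.rpow_nonneg (hσ e).le _) (hρ e), ← Real.rpow_mul (hσ e).le,
        one_div_mul_cancel hpq.ne_zero, Real.rpow_one]
  have hgq : ∑ e ∈ univ, (σ e ^ (-(1 / p)) * η e) ^ q = pEnergy (dualWeight σ p q) q η :=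
    sum_congr rfl fun e _ => by
      rw [Real.mul_rpow (Real.rpow_nonneg (hσ e).le _) (hη e), ← Real.rpow_mul (hσ e).le,
        dualWeight, neg_mul, one_div_mul_eq_div]
  rw [hpair, hfp, hgq] at hholder
  have hβ := pEnergy_pos_of_one_le_sum_mul (dualWeight_pos (p := p) (q := q) hσ) hη h q
  have hB : 0 < pEnergy (dualWeight σ p q) q η ^ (1 / q) := Real.rpow_pos_of_pos hβ _
  have hinv : (pEnergy (dualWeight σ p q) q η ^ (1 / q))⁻¹ ≤ pEnergy σ p ρ ^ (1 / p) := by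
    rw [inv_le_iff_one_le_mul₀ hB]; exact h.trans hholder
  calc pEnergy (dualWeight σ p q) q η ^ (1 - p)
      = ((pEnergy (dualWeight σ p q) q η ^ (1 / q))⁻¹) ^ p := by
        rw [Real.inv_rpow hB.le, ← Real.rpow_neg hB.le, ← Real.rpow_mul hβ.le, mul_neg,
          one_div_mul_eq_div, hpq.div_conj_eq_sub_one, neg_sub]
    _ ≤ (pEnergy σ p ρ ^ (1 / p)) ^ p := Real.rpow_le_rpow (by positivity) hinv hpq.nonneg
    _ = pEnergy σ p ρ := by
        rw [one_div, Real.rpow_inv_rpow (pEnergy_nonneg (fun e => (hσ e).le) hρ p) hpq.ne_zero]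

lemma dualDensity_edgeUsage_eq_of_forall_le {Γ : Type*} [Fintype Γ] {N : Γ → E → ℝ}
    (hN : ∀ γ e, 0 ≤ N γ e) (hσ : ∀ e, 0 < σ e) (hpq : p.HolderConjugate q) {μ : Γ → ℝ}
    (hμ : IsPmf μ)
    (hmin : ∀ ν, IsPmf ν → pEnergy (dualWeight σ p q) q (edgeUsage N μ)
      ≤ pEnergy (dualWeight σ p q) q (edgeUsage N ν))
    {ρ : E → ℝ} (hρ : IsAdmissible N ρ) (hρopt : pEnergy σ p ρ = pModulus N σ p) :
    dualDensity (dualWeight σ p q) q (edgeUsage N μ) = ρ := by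
  have hη := edgeUsage_nonneg hN hμ
  have hpair := one_le_sum_edgeUsage_mul hμ hρ
  have hβ := pEnergy_pos_of_one_le_sum_mul (dualWeight_pos (p := p) (q := q) hσ) hη hpair q
  have hadm := isAdmissible_dualDensity (fun e => (dualWeight_pos hσ e).le) hη hβ
    (pEnergy_edgeUsage_le_of_forall_le hN hpq.symm.lt hμ hmin)
  have hle :
      pEnergy σ p (dualDensity (dualWeight σ p q) q (edgeUsage N μ)) ≤ pModulus N σ p := by
    rw [pEnergy_dualDensity hpq hσ hη hβ, ← hρopt]
    exact rpow_one_sub_le_pEnergy hpq hσ hρ.1 hη hpair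
  exact eq_of_pEnergy_eq_pModulus hpq.lt hσ hadm hρ
    (le_antisymm hle (pModulus_le_pEnergy (fun e => (hσ e).le) hadm)) hρopt

end DualDensity

theorem optimal_usage_unique_and_relation_general
    {E Γ : Type*} [Fintype E] [Fintype Γ]
    (N : Γ → E → ℝ) (hN : ∀ γ e, 0 ≤ N γ e)
    (σ : E → ℝ) (hσ : ∀ e, 0 < σ e)
    (p q : ℝ) (hp : 1 < p) (hq : q = p / (p - 1))
    (μ₁ μ₂ : Γ → ℝ) (hμ₁ : IsPmf μ₁) (hμ₂ : IsPmf μ₂)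
    (hmin₁ : ∀ μ : Γ → ℝ, IsPmf μ →
      (∑ e, σ e ^ (-(q / p)) * edgeUsage N μ₁ e ^ q) ≤
        ∑ e, σ e ^ (-(q / p)) * edgeUsage N μ e ^ q)
    (hmin₂ : ∀ μ : Γ → ℝ, IsPmf μ →
      (∑ e, σ e ^ (-(q / p)) * edgeUsage N μ₂ e ^ q) ≤
        ∑ e, σ e ^ (-(q / p)) * edgeUsage N μ e ^ q)
    (ρstar : E → ℝ) (hρadm : IsAdmissible N ρstar)
    (hρopt : pEnergy σ p ρstar = pModulus N σ p) :
    edgeUsage N μ₁ = edgeUsage N μ₂ ∧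
    ∀ e : E,
      σ e * ρstar e ^ p / pEnergy σ p ρstar =
        σ e ^ (-(q / p)) * edgeUsage N μ₁ e ^ q /
          ∑ e', σ e' ^ (-(q / p)) * edgeUsage N μ₁ e' ^ q := by
  have hpq : p.HolderConjugate q := (Real.holderConjugate_iff_eq_conjExponent hp).2 hq
  have hρ₁ := dualDensity_edgeUsage_eq_of_forall_le hN hσ hpq hμ₁ hmin₁ hρadm hρopt
  have hρ₂ := dualDensity_edgeUsage_eq_of_forall_le hN hσ hpq hμ₂ hmin₂ hρadm hρopt
  have hη₁ := edgeUsage_nonneg hN hμ₁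
  have hβ₁ := pEnergy_pos_of_one_le_sum_mul (dualWeight_pos (p := p) (q := q) hσ) hη₁
    (one_le_sum_edgeUsage_mul hμ₁ hρadm) q
  refine ⟨eq_of_dualDensity_eq (fun e => (dualWeight_pos hσ e).ne') hpq.symm.lt hη₁
    (edgeUsage_nonneg hN hμ₂) (le_antisymm (hmin₁ μ₂ hμ₂) (hmin₂ μ₁ hμ₁)) hβ₁.ne'
    (hρ₁.trans hρ₂.symm), fun e => ?_⟩
  rw [← hρ₁]
  exact mul_dualDensity_rpow_div_pEnergy hpq hσ hη₁ hβ₁ e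

/-- the optimal expected edge usage is unique, and it is related to the
optimal density by `σ(e)ρ*(e)^p / E_{p,σ}(ρ*) = σ̂(e)η*(e)^q / E_{q,σ̂}(η*)`. -/
theorem optimal_usage_unique_and_relation
    {E Γ : Type*} [Fintype E] [Fintype Γ] [Nonempty E] [Nonempty Γ]
    (N : Γ → E → ℝ) (hN : ∀ γ e, 0 ≤ N γ e) (hrow : ∀ γ, ∃ e, 0 < N γ e)
    (σ : E → ℝ) (hσ : ∀ e, 0 < σ e)
    (p q : ℝ) (hp : 1 < p) (hq : q = p / (p - 1))
    (μ₁ μ₂ : Γ → ℝ) (hμ₁ : IsPmf μ₁) (hμ₂ : IsPmf μ₂)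
    (hmin₁ : ∀ μ : Γ → ℝ, IsPmf μ →
      (∑ e, σ e ^ (-(q / p)) * edgeUsage N μ₁ e ^ q) ≤
        ∑ e, σ e ^ (-(q / p)) * edgeUsage N μ e ^ q)
    (hmin₂ : ∀ μ : Γ → ℝ, IsPmf μ →
      (∑ e, σ e ^ (-(q / p)) * edgeUsage N μ₂ e ^ q) ≤
        ∑ e, σ e ^ (-(q / p)) * edgeUsage N μ e ^ q)
    (ρstar : E → ℝ) (hρadm : IsAdmissible N ρstar)
    (hρopt : pEnergy σ p ρstar = pModulus N σ p) :
    edgeUsage N μ₁ = edgeUsage N μ₂ ∧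
    ∀ e : E,
      σ e * ρstar e ^ p / pEnergy σ p ρstar =
        σ e ^ (-(q / p)) * edgeUsage N μ₁ e ^ q /
          ∑ e', σ e' ^ (-(q / p)) * edgeUsage N μ₁ e' ^ q :=
  optimal_usage_unique_and_relation_general N hN σ hσ p q hp hq μ₁ μ₂ hμ₁ hμ₂ hmin₁ hmin₂ ρstar
    hρadm hρopt
end
end

section
/- The ∞-modulus is the reciprocal of the shortest σ^{−1}-length of an object: Mod_{∞,σ}(Γ)^{−1} = min_{γ∈Γ} Σ_{e∈E} N(γ,e) σ(e)^{−1}. (When Γ is a family of connecting paths with 0–1 usage, this says Mod_{∞,σ}(Γ(x,y))^{−1} equals the shortest-path distance from x to y with edge lengths σ^{−1}.) -/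
/-! An admissible `ρ` with `∞`-energy `M` satisfies `ρ ≤ M σ⁻¹` edgewise, so every object has
`σ⁻¹`-length at least `1 / M`; conversely the density `L⁻¹ σ⁻¹`, with `L` the shortest
`σ⁻¹`-length, is admissible and has `∞`-energy exactly `L⁻¹`. -/

open Finset

noncomputable section

/-- The `∞`-energy of a density. -/
def infEnergy {E : Type*} [Fintype E] [Nonempty E] (σ : E → ℝ) (ρ : E → ℝ) : ℝ :=
  Finset.univ.sup' Finset.univ_nonempty (fun e => σ e * ρ e)

/-- The `∞`-modulus: the infimum of the `∞`-energy over admissible densities. -/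
def infModulus {E Γ : Type*} [Fintype E] [Nonempty E] (N : Γ → E → ℝ) (σ : E → ℝ) : ℝ :=
  sInf {x | ∃ ρ : E → ℝ, IsAdmissible N ρ ∧ x = infEnergy σ ρ}

def reciprocalLength {E Γ : Type*} [Fintype E] (N : Γ → E → ℝ) (σ : E → ℝ) (γ : Γ) : ℝ :=
  ∑ e, N γ e * (σ e)⁻¹

section

variable {E Γ : Type*} [Fintype E] {N : Γ → E → ℝ} {σ : E → ℝ}

theorem reciprocalLength_pos (hN : ∀ γ e, 0 ≤ N γ e) (hσ : ∀ e, 0 < σ e) {γ : Γ}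
    (hγ : ∃ e, 0 < N γ e) : 0 < reciprocalLength N σ γ := by
  obtain ⟨e₀, he₀⟩ := hγ
  exact sum_pos' (fun e _ => mul_nonneg (hN γ e) (inv_nonneg.2 (hσ e).le))
    ⟨e₀, mem_univ _, mul_pos he₀ (inv_pos.2 (hσ e₀))⟩

theorem isAdmissible_mul_inv (hσ : ∀ e, 0 < σ e) {c : ℝ} (hc : 0 ≤ c)
    (hlen : ∀ γ, 1 ≤ c * reciprocalLength N σ γ) :
    IsAdmissible N (fun e => c * (σ e)⁻¹) := by
  refine ⟨fun e => mul_nonneg hc (inv_nonneg.2 (hσ e).le), fun γ => ?_⟩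
  convert hlen γ using 1
  rw [reciprocalLength, mul_sum]
  exact sum_congr rfl fun e _ => by ring

variable [Nonempty E]

theorem le_infEnergy (σ ρ : E → ℝ) (e : E) : σ e * ρ e ≤ infEnergy σ ρ :=
  le_sup' (fun e => σ e * ρ e) (mem_univ e)

theorem infEnergy_mul_inv (hσ : ∀ e, σ e ≠ 0) (c : ℝ) :
    infEnergy σ (fun e => c * (σ e)⁻¹) = c := by
  have hconst : ∀ e, σ e * (c * (σ e)⁻¹) = c := fun e => by field_simp [hσ e]
  simp only [infEnergy, hconst, sup'_const]

theorem one_le_infEnergy_mul_reciprocalLength (hN : ∀ γ e, 0 ≤ N γ e) (hσ : ∀ e, 0 < σ e)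
    {ρ : E → ℝ} (hρ : IsAdmissible N ρ) (γ : Γ) :
    1 ≤ infEnergy σ ρ * reciprocalLength N σ γ := by
  have hρ_le : ∀ e, ρ e ≤ infEnergy σ ρ * (σ e)⁻¹ := fun e => by
    rw [← div_eq_mul_inv, le_div_iff₀' (hσ e)]
    exact le_infEnergy σ ρ e
  calc 1 ≤ ∑ e, N γ e * ρ e := hρ.2 γ
    _ ≤ ∑ e, N γ e * (infEnergy σ ρ * (σ e)⁻¹) :=
      sum_le_sum fun e _ => mul_le_mul_of_nonneg_left (hρ_le e) (hN γ e)
    _ = infEnergy σ ρ * reciprocalLength N σ γ := by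
      rw [reciprocalLength, mul_sum]
      exact sum_congr rfl fun e _ => by ring

end

/-- `Mod_{∞,σ}(Γ)⁻¹ = min_γ Σ_e N(γ,e) σ(e)⁻¹`. -/
theorem inf_modulus_eq_shortest_length
    {E Γ : Type*} [Fintype E] [Fintype Γ] [Nonempty E] [Nonempty Γ]
    (N : Γ → E → ℝ) (hN : ∀ γ e, 0 ≤ N γ e) (hrow : ∀ γ, ∃ e, 0 < N γ e)
    (σ : E → ℝ) (hσ : ∀ e, 0 < σ e) :
    (infModulus N σ)⁻¹ =
      Finset.univ.inf' Finset.univ_nonempty (fun γ : Γ => ∑ e, N γ e * (σ e)⁻¹) := by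
  set L := univ.inf' univ_nonempty (reciprocalLength N σ)
  obtain ⟨γ₀, -, hγ₀⟩ : ∃ γ₀ ∈ univ, L = reciprocalLength N σ γ₀ :=
    exists_mem_eq_inf' univ_nonempty _
  have hL : 0 < L := hγ₀ ▸ reciprocalLength_pos hN hσ (hrow γ₀)
  have hleast : IsLeast {x | ∃ ρ, IsAdmissible N ρ ∧ x = infEnergy σ ρ} L⁻¹ := by
    refine ⟨⟨_, isAdmissible_mul_inv hσ (inv_nonneg.2 hL.le) fun γ => ?_,
      (infEnergy_mul_inv (fun e => (hσ e).ne') L⁻¹).symm⟩, ?_⟩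
    · exact (one_le_inv_mul₀ hL).2 (inf'_le _ (mem_univ γ))
    · rintro _ ⟨ρ, hρ, rfl⟩
      rw [inv_le_iff_one_le_mul₀ hL, hγ₀]
      exact one_le_infEnergy_mul_reciprocalLength hN hσ hρ γ₀
  rw [infModulus, hleast.csInf_eq, inv_inv]
  rfl
end
end
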